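/- arXiv:1507.05769 — 2 statements merged into one kernel-verified Lean document; each statement's English description precedes it below -/
import Mathlib

section
/- (Optimality principle.) Let X be a finite set, W : X → ℝ>0 fixed, and let lower/upper bounds w̲ ≤ w̄ on X × X be given, with the feasible set 𝒲 of weight functions w satisfying w̲(x,y) ≤ w(x,y) ≤ w̄(x,y) for x ≠ y, w(x,y) = w(y,x), w ≥ 0, and Σ_y w(x,y) = W(x) for all x. Let q, f : X → ℝ, h(x) = q(x)/W(x), ψ(x,y) = (h(x) − h(y))(f(y) − f(x)). Suppose w* ∈ 𝒲 minimizes ⟨q, f⟩¹_w = Σ_x Σ_y q(x)(w(x,y)/W(x))f(y) over 𝒲. Then for every pair x ≠ y with ψ(x,y) > 0 for which the value w̲(x,y) is feasible (i.e., decreasing w*(x,y) and w*(y,x) by d and increasing the loops w*(x,x), w*(y,y) by d stays in 𝒲 for small d > 0), it must hold that w*(x,y) = w̲(x,y). -/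
/-!
Moving mass `d` from the pair `{x, y}` onto the loops at `x` and `y` adds `d • δ δᵀ` to `w`,
where `δ = 𝟙_x - 𝟙_y`. The objective is linear in `w`, and on `δ δᵀ` it takes the value
`(h x - h y) (f x - f y) = -ψ(x, y) < 0`. So if `w*(x, y) > w̲(x, y)`, the admissible transfer
`d = w*(x, y) - w̲(x, y)` strictly decreases the objective, contradicting minimality.
-/

open Finset

section

variable {X : Type*}

theorem transfer_eq_add_rankOne [DecidableEq X] (w : X → X → ℝ) (d : ℝ) {x y : X}
    (hxy : x ≠ y) :
    (fun a b =>
      if (a, b) = (x, y) ∨ (a, b) = (y, x) then w a b - d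
      else if (a, b) = (x, x) ∨ (a, b) = (y, y) then w a b + d
      else w a b) =
      fun a b => w a b + d * (Pi.single x 1 - Pi.single y 1 : X → ℝ) a *
        (Pi.single x 1 - Pi.single y 1 : X → ℝ) b := by
  funext a b
  by_cases hax : a = x <;> by_cases hay : a = y <;> by_cases hbx : b = x <;>
    by_cases hby : b = y <;> simp_all <;> ring

noncomputable def weightedPairing [Fintype X] (W q f : X → ℝ) (w : X → X → ℝ) : ℝ :=
  ∑ a, ∑ b, q a * (w a b / W a) * f b

theorem weightedPairing_add_rankOne [Fintype X] (W q f : X → ℝ) (w : X → X → ℝ) (d : ℝ)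
    (u v : X → ℝ) :
    weightedPairing W q f (fun a b => w a b + d * u a * v b) =
      weightedPairing W q f w + d * (∑ a, u a * (q a / W a)) * ∑ b, v b * f b := by
  unfold weightedPairing
  rw [mul_assoc, sum_mul_sum, mul_sum, ← sum_add_distrib]
  refine sum_congr rfl fun a _ => ?_
  rw [mul_sum, ← sum_add_distrib]
  exact sum_congr rfl fun b _ => by ring

theorem sum_single_sub_single_mul {R : Type*} [Ring R] [Fintype X] [DecidableEq X] (x y : X)
    (g : X → R) : ∑ a, (Pi.single x 1 - Pi.single y 1 : X → R) a * g a = g x - g y := by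
  simp [Pi.single_apply, sub_mul, sum_sub_distrib]

theorem weightedPairing_transfer [Fintype X] [DecidableEq X] (W q f : X → ℝ)
    (w : X → X → ℝ) (d : ℝ) {x y : X} (hxy : x ≠ y) :
    weightedPairing W q f (fun a b =>
      if (a, b) = (x, y) ∨ (a, b) = (y, x) then w a b - d
      else if (a, b) = (x, x) ∨ (a, b) = (y, y) then w a b + d
      else w a b) =
      weightedPairing W q f w - d * ((q x / W x - q y / W y) * (f y - f x)) := by
  rw [transfer_eq_add_rankOne w d hxy, weightedPairing_add_rankOne,
    sum_single_sub_single_mul x y (fun a => q a / W a),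
    sum_single_sub_single_mul]
  ring

end

theorem optimality_principle_general
    {X : Type*} [Fintype X] [DecidableEq X]
    (W : X → ℝ)
    (lw uw : X → X → ℝ)
    (Wfeas : Set (X → X → ℝ))
    (hWfeas : Wfeas = {w | (∀ x y, 0 ≤ w x y) ∧ (∀ x y, w x y = w y x) ∧
      (∀ x y, x ≠ y → lw x y ≤ w x y ∧ w x y ≤ uw x y) ∧
      (∀ x, ∑ y, w x y = W x)})
    (q f : X → ℝ)
    (wstar : X → X → ℝ) (hws : wstar ∈ Wfeas)
    (hmin : ∀ w ∈ Wfeas,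
      ∑ x, ∑ y, q x * (wstar x y / W x) * f y ≤ ∑ x, ∑ y, q x * (w x y / W x) * f y)
    (x y : X) (hxy : x ≠ y)
    (hpsi : 0 < (q x / W x - q y / W y) * (f y - f x))
    (hfeas : ∀ d : ℝ, 0 < d → d ≤ wstar x y - lw x y →
      (fun a b =>
        if (a, b) = (x, y) ∨ (a, b) = (y, x) then wstar a b - d
        else if (a, b) = (x, x) ∨ (a, b) = (y, y) then wstar a b + d
        else wstar a b) ∈ Wfeas) :
    wstar x y = lw x y := by
  rw [hWfeas] at hws
  have hlow : lw x y ≤ wstar x y := (hws.2.2.1 x y hxy).1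
  by_contra hne
  have hd : 0 < wstar x y - lw x y := sub_pos.2 (lt_of_le_of_ne hlow (Ne.symm hne))
  have hle : weightedPairing W q f wstar ≤ weightedPairing W q f _ :=
    hmin _ (hfeas _ hd le_rfl)
  rw [weightedPairing_transfer W q f wstar _ hxy] at hle
  linarith [mul_pos hd hpsi]

theorem optimality_principle
    {X : Type*} [Fintype X] [DecidableEq X] [Nonempty X]
    (W : X → ℝ) (hW : ∀ x, 0 < W x)
    (lw uw : X → X → ℝ) (hlu : ∀ x y, lw x y ≤ uw x y)
    (Wfeas : Set (X → X → ℝ))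
    (hWfeas : Wfeas = {w | (∀ x y, 0 ≤ w x y) ∧ (∀ x y, w x y = w y x) ∧
      (∀ x y, x ≠ y → lw x y ≤ w x y ∧ w x y ≤ uw x y) ∧
      (∀ x, ∑ y, w x y = W x)})
    (q f : X → ℝ)
    (wstar : X → X → ℝ) (hws : wstar ∈ Wfeas)
    (hmin : ∀ w ∈ Wfeas,
      ∑ x, ∑ y, q x * (wstar x y / W x) * f y ≤ ∑ x, ∑ y, q x * (w x y / W x) * f y)
    (x y : X) (hxy : x ≠ y)
    (hpsi : 0 < (q x / W x - q y / W y) * (f y - f x))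
    (hfeas : ∀ d : ℝ, 0 < d → d ≤ wstar x y - lw x y →
      (fun a b =>
        if (a, b) = (x, y) ∨ (a, b) = (y, x) then wstar a b - d
        else if (a, b) = (x, x) ∨ (a, b) = (y, y) then wstar a b + d
        else wstar a b) ∈ Wfeas) :
    wstar x y = lw x y :=
  optimality_principle_general W lw uw Wfeas hWfeas q f wstar hws hmin x y hxy hpsi hfeas
end

section
/- Non-additivity of lower transition probabilities: there exist a finite set X, interval bounds w̲ ≤ w̄ with fixed marginals W, states x, y and n = 2, such that min_{w₁,w₂∈𝒲} Σ_z P_{w₁}(x,z)P_{w₂}(z,y) ≠ Σ_z (min_{w∈𝒲} P_w(x,z))·(min_{w∈𝒲} P_w(z,y)), i.e., the two-step lower transition probability is not obtained by composing one-step lower transition probabilities; concretely, for X = {1,2}, W = (1,1), w̲ = [[0.1,0.2],[0.2,0.1]], w̄ = [[0.8,0.9],[0.9,0.8]] with symmetry constraint and fixed row sums, min over feasible (w₁,w₂) of the (1,2) entry of P_{w₁}P_{w₂} equals 0.18, whereas (min P_w(1,1))·(min P_w(1,2)) + (min P_w(1,2))·(min P_w(2,2)) = 0.1·0.2 + 0.2·0.1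 = 0.04 ≠ 0.18. -/
open Finset

def Wfeas16 : Set (Fin 2 → Fin 2 → ℝ) :=
  {w | (∀ x y, 0 ≤ w x y) ∧ (∀ x y, w x y = w y x) ∧
    (∀ x y, !![(0.1 : ℝ), 0.2; 0.2, 0.1] x y ≤ w x y ∧
      w x y ≤ !![(0.8 : ℝ), 0.9; 0.9, 0.8] x y) ∧
    (∀ x, ∑ y, w x y = 1)}

noncomputable def P16 (w : Fin 2 → Fin 2 → ℝ) (x y : Fin 2) : ℝ := w x y / ∑ y', w x y'

lemma wfeas_struct {w : Fin 2 → Fin 2 → ℝ} (hw : w ∈ Wfeas16) :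
    0.1 ≤ w 0 0 ∧ w 0 0 ≤ 0.8 ∧ w 0 1 = 1 - w 0 0 ∧ w 1 0 = 1 - w 0 0 ∧
    w 1 1 = w 0 0 ∧ (∑ y', w 0 y') = 1 ∧ (∑ y', w 1 y') = 1 := by
  obtain ⟨-, hsym, hb, hsum⟩ := hw
  have h0 := hsum 0
  have h1 := hsum 1
  rw [Fin.sum_univ_two] at h0 h1
  have hb00 := hb 0 0
  simp [Matrix.cons_val_zero, Matrix.cons_val_one, Matrix.head_cons] at hb00
  have hs := hsym 0 1
  refine ⟨hb00.1, hb00.2, by linarith, by linarith, by linarith,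
    by rw [Fin.sum_univ_two]; linarith, by rw [Fin.sum_univ_two]; linarith⟩

lemma mat_mem (a : ℝ) (h1 : 0.1 ≤ a) (h2 : a ≤ 0.8) :
    (fun x y => !![a, 1 - a; 1 - a, a] x y) ∈ Wfeas16 := by
  refine ⟨?_, ?_, ?_, ?_⟩ <;> intro x
  · intro y; fin_cases x <;> fin_cases y <;>
      simp [Matrix.cons_val_zero, Matrix.cons_val_one, Matrix.head_cons] <;> linarith
  · intro y; fin_cases x <;> fin_cases y <;>
      simp [Matrix.cons_val_zero, Matrix.cons_val_one, Matrix.head_cons]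
  · intro y; fin_cases x <;> fin_cases y <;>
      simp [Matrix.cons_val_zero, Matrix.cons_val_one, Matrix.head_cons] <;>
      constructor <;> linarith
  · fin_cases x <;>
      simp [Fin.sum_univ_two, Matrix.cons_val_zero, Matrix.cons_val_one, Matrix.head_cons]

theorem non_additivity :
    IsLeast {v : ℝ | ∃ w₁ ∈ Wfeas16, ∃ w₂ ∈ Wfeas16,
        v = ∑ z, P16 w₁ 0 z * P16 w₂ z 1} 0.18 ∧
    IsLeast {v : ℝ | ∃ w ∈ Wfeas16, v = P16 w 0 0} 0.1 ∧
    IsLeast {v : ℝ | ∃ w ∈ Wfeas16, v = P16 w 0 1} 0.2 ∧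
    IsLeast {v : ℝ | ∃ w ∈ Wfeas16, v = P16 w 1 1} 0.1 ∧
    (0.1 : ℝ) * 0.2 + 0.2 * 0.1 = 0.04 ∧ (0.04 : ℝ) ≠ 0.18 := by
  have hmem1 := mat_mem 0.1 (by norm_num) (by norm_num)
  have hmem8 := mat_mem 0.8 (by norm_num) (by norm_num)
  refine ⟨⟨⟨_, hmem1, _, hmem1, ?_⟩, ?_⟩, ⟨⟨_, hmem1, ?_⟩, ?_⟩,
    ⟨⟨_, hmem8, ?_⟩, ?_⟩, ⟨⟨_, hmem1, ?_⟩, ?_⟩, by norm_num, by norm_num⟩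
  · simp only [P16, Fin.sum_univ_two]
    norm_num [Matrix.cons_val_zero, Matrix.cons_val_one, Matrix.head_cons]
  · rintro v ⟨w₁, hw₁, w₂, hw₂, rfl⟩
    obtain ⟨ha1, ha2, he1, he2, he3, hs1, hs2⟩ := wfeas_struct hw₁
    obtain ⟨hb1, hb2, hf1, hf2, hf3, ht1, ht2⟩ := wfeas_struct hw₂
    simp only [P16, Fin.sum_univ_two] at *
    rw [hs1, ht1, ht2]
    set a := w₁ 0 0
    set b := w₂ 0 0
    rw [he1, hf1, hf3]
    ring_nf
    nlinarith [mul_nonneg (sub_nonneg.2 ha1) (sub_nonneg.2 hb1),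
      mul_nonneg (sub_nonneg.2 ha2) (sub_nonneg.2 hb2)]
  · simp only [P16, Fin.sum_univ_two]
    norm_num [Matrix.cons_val_zero, Matrix.cons_val_one, Matrix.head_cons]
  · rintro v ⟨w, hw, rfl⟩
    obtain ⟨h1, h2, h3, h4, h5, h6, h7⟩ := wfeas_struct hw
    simp only [P16]; rw [h6]; simpa using h1
  · simp only [P16, Fin.sum_univ_two]
    norm_num [Matrix.cons_val_zero, Matrix.cons_val_one, Matrix.head_cons]
  · rintro v ⟨w, hw, rfl⟩
    obtain ⟨h1, h2, h3, h4, h5, h6, h7⟩ := wfeas_struct hw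
    simp only [P16]; rw [h6, h3]; simp; linarith
  · simp only [P16, Fin.sum_univ_two]
    norm_num [Matrix.cons_val_zero, Matrix.cons_val_one, Matrix.head_cons]
  · rintro v ⟨w, hw, rfl⟩
    obtain ⟨h1, h2, h3, h4, h5, h6, h7⟩ := wfeas_struct hw
    simp only [P16]; rw [h7, h5]; simpa using h1
end
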